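/- Let f_A, f_{A^c} be measurable functions that are positive μ-almost everywhere with ∫ f_A dμ = 1 = ∫ f_{A^c} dμ, and suppose μ(f_A ≠ f_{A^c}) > 0. Then for every p ∈ (0,1), ∫ f_A·f_{A^c}/(p·f_A + (1−p)·f_{A^c}) dμ < 1, while for p = 0 the integral equals 1. -/

import Mathlib

open MeasureTheory Set

/-!
For `a, b > 0` and `p ∈ (0, 1)`,
`p b + (1 - p) a - a b / (p a + (1 - p) b) = p (1 - p) (a - b)² / (p a + (1 - p) b)`,
so the integrand is dominated by the probability density `p f_{A^c} + (1 - p) f_A`,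
strictly wherever `f_A ≠ f_{A^c}`; integrating gives the strict inequality.
-/

section Pointwise

variable {a b p : ℝ}

lemma convex_comb_pos (ha : 0 < a) (hb : 0 < b) (hp : p ∈ Icc (0 : ℝ) 1) :
    0 < p * a + (1 - p) * b := by
  obtain ⟨hp0, hp1⟩ := hp
  rcases hp0.eq_or_lt with rfl | hp0
  · simpa using hb
  · nlinarith

lemma convex_comb_sub_mul_div_convex_comb (hd : p * a + (1 - p) * b ≠ 0) :
    p * b + (1 - p) * a - a * b / (p * a + (1 - p) * b)
      = p * (1 - p) * (a - b) ^ 2 / (p * a + (1 - p) * b) := by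
  rw [eq_div_iff hd, sub_mul, div_mul_cancel₀ _ hd]
  ring

lemma mul_div_convex_comb_nonneg (ha : 0 < a) (hb : 0 < b) (hp : p ∈ Icc (0 : ℝ) 1) :
    0 ≤ a * b / (p * a + (1 - p) * b) :=
  div_nonneg (mul_pos ha hb).le (convex_comb_pos ha hb hp).le

lemma mul_div_convex_comb_le (ha : 0 < a) (hb : 0 < b) (hp : p ∈ Icc (0 : ℝ) 1) :
    a * b / (p * a + (1 - p) * b) ≤ p * b + (1 - p) * a := by
  have hd := convex_comb_pos ha hb hp
  have key := convex_comb_sub_mul_div_convex_comb hd.ne'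
  have : 0 ≤ p * (1 - p) * (a - b) ^ 2 / (p * a + (1 - p) * b) := by
    have := hp.1; have := sub_nonneg.2 hp.2; positivity
  linarith

lemma mul_div_convex_comb_lt (ha : 0 < a) (hb : 0 < b) (hp : p ∈ Ioo (0 : ℝ) 1)
    (hab : a ≠ b) : a * b / (p * a + (1 - p) * b) < p * b + (1 - p) * a := by
  have hd := convex_comb_pos ha hb (Ioo_subset_Icc_self hp)
  have key := convex_comb_sub_mul_div_convex_comb hd.ne'
  have : 0 < p * (1 - p) * (a - b) ^ 2 / (p * a + (1 - p) * b) := by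
    have := hp.1; have := sub_pos.2 hp.2; have := sub_ne_zero.2 hab; positivity
  linarith

end Pointwise

lemma integral_lt_integral_of_ae_le_of_measure_setOf_lt_ne_zero {α : Type*}
    [MeasurableSpace α] {μ : Measure α} {f g : α → ℝ} (hf : Integrable f μ)
    (hg : Integrable g μ) (hle : f ≤ᵐ[μ] g) (hlt : μ {x | f x < g x} ≠ 0) :
    ∫ x, f x ∂μ < ∫ x, g x ∂μ := by
  have hsupp : {x | f x < g x} ⊆ Function.support (g - f) := fun x hx =>
    sub_ne_zero.2 (ne_of_gt hx)
  have hpos : 0 < ∫ x, (g - f) x ∂μ :=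
    (integral_pos_iff_support_of_nonneg_ae (hle.mono fun _ hx => sub_nonneg.2 hx) (hg.sub hf)).2
      ((pos_iff_ne_zero.2 hlt).trans_le (measure_mono hsupp))
  rw [Pi.sub_def, integral_sub hg hf] at hpos
  linarith

section Mixture

variable {Ω : Type*} [MeasurableSpace Ω] {μ : Measure Ω} {f g : Ω → ℝ} {p : ℝ}

lemma integrable_mul_div_convex_comb (hf : Integrable f μ) (hg : Integrable g μ)
    (hf_pos : ∀ᵐ ω ∂μ, 0 < f ω) (hg_pos : ∀ᵐ ω ∂μ, 0 < g ω) (hp : p ∈ Icc (0 : ℝ) 1) :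
    Integrable (fun ω => f ω * g ω / (p * f ω + (1 - p) * g ω)) μ := by
  refine ((hg.const_mul p).add (hf.const_mul (1 - p))).mono' ?_ ?_
  · exact ((hf.aemeasurable.mul hg.aemeasurable).div
      ((hf.aemeasurable.const_mul p).add (hg.aemeasurable.const_mul (1 - p)))).aestronglyMeasurable
  · filter_upwards [hf_pos, hg_pos] with ω hfω hgω
    rw [Real.norm_of_nonneg (mul_div_convex_comb_nonneg hfω hgω hp)]
    exact mul_div_convex_comb_le hfω hgω hp

lemma integral_mul_div_convex_comb_lt (hf : Integrable f μ) (hg : Integrable g μ)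
    (hf_pos : ∀ᵐ ω ∂μ, 0 < f ω) (hg_pos : ∀ᵐ ω ∂μ, 0 < g ω) (hne : μ {ω | f ω ≠ g ω} ≠ 0)
    (hp : p ∈ Ioo (0 : ℝ) 1) :
    ∫ ω, f ω * g ω / (p * f ω + (1 - p) * g ω) ∂μ
      < p * ∫ ω, g ω ∂μ + (1 - p) * ∫ ω, f ω ∂μ := by
  have hg' := hg.const_mul p
  have hf' := hf.const_mul (1 - p)
  rw [← integral_const_mul, ← integral_const_mul, ← integral_add hg' hf']
  refine integral_lt_integral_of_ae_le_of_measure_setOf_lt_ne_zero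
    (integrable_mul_div_convex_comb hf hg hf_pos hg_pos (Ioo_subset_Icc_self hp))
    (hg'.add hf') ?_ ?_
  · filter_upwards [hf_pos, hg_pos] with ω hfω hgω
    exact mul_div_convex_comb_le hfω hgω (Ioo_subset_Icc_self hp)
  · refine ne_bot_of_le_ne_bot hne (measure_mono_ae ?_)
    filter_upwards [hf_pos, hg_pos] with ω hfω hgω hω
    exact mul_div_convex_comb_lt hfω hgω hp hω

end Mixture

theorem mixed_density_integral_lt_one_general
    {Ω : Type*} {ℋ : MeasurableSpace Ω} (μ : Measure Ω)
    (fA fAc : Ω → ℝ)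
    (hfA_pos : ∀ᵐ ω ∂μ, 0 < fA ω) (hfAc_pos : ∀ᵐ ω ∂μ, 0 < fAc ω)
    (hfA_one : ∫ ω, fA ω ∂μ = 1) (hfAc_one : ∫ ω, fAc ω ∂μ = 1)
    (hne : μ {ω | fA ω ≠ fAc ω} ≠ 0) :
    (∀ p ∈ Set.Ioo (0:ℝ) 1,
      ∫ ω, fA ω * fAc ω / (p * fA ω + (1 - p) * fAc ω) ∂μ < 1) ∧
    ∫ ω, fA ω * fAc ω / ((0:ℝ) * fA ω + (1 - 0) * fAc ω) ∂μ = 1 := by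
  have hfA : Integrable fA μ := .of_integral_ne_zero (by simp [hfA_one])
  have hfAc : Integrable fAc μ := .of_integral_ne_zero (by simp [hfAc_one])
  refine ⟨fun p hp => ?_, ?_⟩
  · have hlt := integral_mul_div_convex_comb_lt hfA hfAc hfA_pos hfAc_pos hne hp
    rw [hfA_one, hfAc_one] at hlt
    linarith
  · refine (integral_congr_ae ?_).trans hfA_one
    filter_upwards [hfAc_pos] with ω hω
    rw [zero_mul, zero_add, sub_zero, one_mul, mul_div_cancel_right₀ _ hω.ne']

/-- Let `f_A, f_{A^c}` be measurable functions, positive `μ`-a.e.,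
with `∫ f_A dμ = 1 = ∫ f_{A^c} dμ`, and suppose `μ(f_A ≠ f_{A^c}) > 0`. Then for every
`p ∈ (0,1)`, `∫ f_A·f_{A^c}/(p·f_A + (1−p)·f_{A^c}) dμ < 1`, while for `p = 0` the
integral equals `1`. -/
theorem mixed_density_integral_lt_one
    {Ω : Type*} {ℋ : MeasurableSpace Ω} (μ : Measure Ω) [SigmaFinite μ]
    (fA fAc : Ω → ℝ) (hfA_meas : Measurable fA) (hfAc_meas : Measurable fAc)
    (hfA_pos : ∀ᵐ ω ∂μ, 0 < fA ω) (hfAc_pos : ∀ᵐ ω ∂μ, 0 < fAc ω)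
    (hfA_one : ∫ ω, fA ω ∂μ = 1) (hfAc_one : ∫ ω, fAc ω ∂μ = 1)
    (hne : μ {ω | fA ω ≠ fAc ω} ≠ 0) :
    (∀ p ∈ Set.Ioo (0:ℝ) 1,
      ∫ ω, fA ω * fAc ω / (p * fA ω + (1 - p) * fAc ω) ∂μ < 1) ∧
    ∫ ω, fA ω * fAc ω / ((0:ℝ) * fA ω + (1 - 0) * fAc ω) ∂μ = 1 :=
  mixed_density_integral_lt_one_general (ℋ := ℋ) μ fA fAc hfA_pos hfAc_pos hfA_one hfAc_one hne
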